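/- Let D be a finite digraph, let S and W be disjoint sets of vertices of D, and let (s_1,t_1), …, (s_k,t_k) be pairs of vertices such that D contains a directed path from s_i to t_i for every i ∈ [k]. Then there exist directed paths P_1, …, P_k, where each P_i is a shortest directed path from s_i to t_i in D, together with a partial function f assigning to ordered pairs (u,v) ∈ S × S a vertex f(u,v) ∈ W, such that whenever some P_i contains a subpath u → w → v with u, v ∈ S and w ∈ W, then w = f(u,v). In other words, the shortest paths can be chosen so that, for each ordered pair (u,v) ∈ S × S, all length-2 subpaths from u to v through a vertex of W occurring anywhere among the paths use the same middle vertex. -/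

import Mathlib

/-- A mixed graph `G = (V, E, A)`: a simple graph `E` of undirected edges together
with a set `A` of arcs (ordered pairs of distinct vertices). -/
structure MixedGraph (V : Type*) where
  E : SimpleGraph V
  A : V → V → Prop
  A_irrefl : ∀ v : V, ¬ A v v

namespace MixedGraph

variable {V : Type*}

/-- The underlying simple graph of a mixed graph. -/
def underlying (G : MixedGraph V) : SimpleGraph V where
  Adj u v := G.E.Adj u v ∨ G.A u v ∨ G.A v u
  symm := by
    refine ⟨?_⟩
    intro u v h
    rcases h with h | h | h
    · exact Or.inl h.symm
    · exact Or.inr (Or.inr h)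
    · exact Or.inr (Or.inl h)
  loopless := by
    refine ⟨?_⟩
    intro v h
    rcases h with h | h | h
    · exact G.E.irrefl h
    · exact G.A_irrefl v h
    · exact G.A_irrefl v h

/-- `G` contains a mixed cycle: a cyclic sequence of `p ≥ 2` pairwise distinct
vertices in which each consecutive pair (cyclically) is an undirected edge of `E`
or an arc of `A`, and no edge of `E` is used by two different consecutive pairs.
(`useE i = true` means the `i`-th consecutive pair uses an edge of `E`.) -/
def HasMixedCycle (G : MixedGraph V) : Prop :=
  ∃ (p : ℕ) (c : Fin (p + 2) → V) (useE : Fin (p + 2) → Bool),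
    Function.Injective c ∧
    (∀ i : Fin (p + 2),
      (useE i = true → G.E.Adj (c i) (c (i + 1))) ∧
      (useE i = false → G.A (c i) (c (i + 1)))) ∧
    (∀ i j : Fin (p + 2), i ≠ j → useE i = true → useE j = true →
      s(c i, c (i + 1)) ≠ s(c j, c (j + 1)))

/-- A mixed graph is mixed acyclic if it has no mixed cycle. -/
def MixedAcyclic (G : MixedGraph V) : Prop := ¬ G.HasMixedCycle

/-- An orientation of the undirected edges of a mixed graph: each edge
`{u,v} ∈ E` is assigned exactly one of the two directions `(u,v)`, `(v,u)`. -/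
structure Orientation (G : MixedGraph V) where
  dir : V → V → Prop
  dir_adj : ∀ u v : V, dir u v → G.E.Adj u v
  total : ∀ u v : V, G.E.Adj u v → dir u v ∨ dir v u
  antisymm : ∀ u v : V, dir u v → ¬ dir v u

/-- The arc relation of the digraph `G_λ`: the original arcs together with the
chosen orientations of the undirected edges. -/
def Orientation.arc {G : MixedGraph V} (lam : Orientation G) (u v : V) : Prop :=
  G.A u v ∨ lam.dir u v

/-- The orientation `lam` satisfies the set `T` of terminal pairs if `G_λ`
contains a directed path from `s` to `t` for every `(s, t) ∈ T`. -/
def Orientation.Satisfies {G : MixedGraph V} (lam : Orientation G)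
    (T : Set (V × V)) : Prop :=
  ∀ p ∈ T, Relation.ReflTransGen lam.arc p.1 p.2

/-- `(G, T)` is a yes-instance of Steiner Orientation: some orientation of the
undirected edges satisfies all terminal pairs. -/
def YesInstance (G : MixedGraph V) (T : Set (V × V)) : Prop :=
  ∃ lam : Orientation G, lam.Satisfies T

/-- The number of arcs of `G` having `v` as head or as tail. -/
noncomputable def degA (G : MixedGraph V) (v : V) : ℕ :=
  {p : V × V | G.A p.1 p.2 ∧ (p.1 = v ∨ p.2 = v)}.ncard

end MixedGraph

/-- A directed path from `s` to `t` in the digraph with arc relation `R`: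
a list of pairwise distinct vertices, consecutive ones joined by arcs,
starting at `s` and ending at `t`. -/
def IsDipath {V : Type*} (R : V → V → Prop) (l : List V) (s t : V) : Prop :=
  l.Chain' R ∧ l.Nodup ∧ l.head? = some s ∧ l.getLast? = some t

/-!
Choose for every pair `(u, v)` a vertex `f u v` that is the middle vertex of some path
`u → w → v` with `w ∈ W`, whenever there is one. Start from shortest walks `s_i ⇝ t_i` and
replace the middle vertex `w` of every subwalk `u → w → v` with `u, v ∈ S`, `w ∈ W` by `f u v`.
As `S` and `W` are disjoint, these subwalks can share only their end vertices, so the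
replacements do not interfere and every such subwalk of the result has middle vertex `f u v`.
The result is again a walk of the same length, hence a shortest walk, and a shortest walk
repeats no vertex.
-/

section Walks

variable {V : Type*} {R : V → V → Prop} {l : List V} {s t : V}

def IsDiwalk (R : V → V → Prop) (l : List V) (s t : V) : Prop :=
  l.IsChain R ∧ l.head? = some s ∧ l.getLast? = some t

theorem IsDipath.isDiwalk (h : IsDipath R l s t) : IsDiwalk R l s t :=
  ⟨h.1, h.2.2⟩

theorem List.exists_eq_append_cons_append_cons_of_not_nodup (h : ¬ l.Nodup) :
    ∃ (a : V) (l₁ l₂ l₃ : List V), l = l₁ ++ a :: (l₂ ++ a :: l₃) := by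
  induction l with
  | nil => exact absurd List.nodup_nil h
  | cons x l ih =>
    by_cases hx : x ∈ l
    · obtain ⟨l₂, l₃, rfl⟩ := List.append_of_mem hx
      exact ⟨x, [], l₂, l₃, rfl⟩
    · obtain ⟨a, l₁, l₂, l₃, rfl⟩ := ih (by simpa [List.nodup_cons, hx] using h)
      exact ⟨a, x :: l₁, l₂, l₃, rfl⟩

theorem IsDiwalk.exists_shorter_of_not_nodup (h : IsDiwalk R l s t) (hnd : ¬ l.Nodup) :
    ∃ l', IsDiwalk R l' s t ∧ l'.length < l.length := by
  obtain ⟨hc, hs, ht⟩ := h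
  obtain ⟨a, l₁, l₂, l₃, rfl⟩ := List.exists_eq_append_cons_append_cons_of_not_nodup hnd
  refine ⟨l₁ ++ a :: l₃, ⟨?_, ?_, ?_⟩, by simp⟩
  · rw [List.isChain_split] at hc ⊢
    exact ⟨hc.1, hc.2.infix ⟨a :: l₂, [], by simp⟩⟩
  · rw [← hs, List.head?_append, List.head?_append]
    rfl
  · rw [← ht, ← List.cons_append, ← List.append_assoc, List.getLast?_append,
      List.getLast?_append, List.getLast?_cons]
    simp

theorem IsDiwalk.exists_shortest (h : IsDiwalk R l s t) :
    ∃ l', IsDiwalk R l' s t ∧ ∀ l'', IsDiwalk R l'' s t → l'.length ≤ l''.length := by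
  obtain ⟨l', hl', hmin⟩ := (measure List.length).wf.has_min {l' | IsDiwalk R l' s t} ⟨l, h⟩
  exact ⟨l', hl', fun l'' hl'' => not_lt.mp (hmin l'' hl'')⟩

theorem IsDiwalk.isDipath_of_shortest (h : IsDiwalk R l s t)
    (hmin : ∀ l', IsDiwalk R l' s t → l.length ≤ l'.length) : IsDipath R l s t := by
  refine ⟨h.1, by_contra fun hnd => ?_, h.2⟩
  obtain ⟨l', hl', hlt⟩ := h.exists_shorter_of_not_nodup hnd
  exact (hmin l' hl').not_gt hlt

end Walks

open Classical in
noncomputable def replaceMiddles {V : Type*} (S W : Set V) (f : V → V → V) :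
    List V → List V
  | u :: wl@(w :: vl@(v :: _)) =>
      if u ∈ S ∧ w ∈ W ∧ v ∈ S then u :: f u v :: replaceMiddles S W f vl
      else u :: replaceMiddles S W f wl
  | l => l
termination_by l => l.length

section ReplaceMiddles

variable {V : Type*} {S W : Set V} {f : V → V → V}

theorem replaceMiddles_cons (a : V) (l : List V) :
    ∃ M, replaceMiddles S W f (a :: l) = a :: M := by
  rcases l with _ | ⟨b, _ | ⟨c, rest⟩⟩
  · exact ⟨[], by simp [replaceMiddles]⟩
  · exact ⟨[b], by simp [replaceMiddles]⟩
  · rw [replaceMiddles]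
    split_ifs <;> exact ⟨_, rfl⟩

theorem replaceMiddles_cons_of_notMem {a : V} (ha : a ∉ S) (l : List V) :
    replaceMiddles S W f (a :: l) = a :: replaceMiddles S W f l := by
  rcases l with _ | ⟨b, _ | ⟨c, rest⟩⟩
  · simp [replaceMiddles]
  · simp [replaceMiddles]
  · rw [replaceMiddles, if_neg (fun h => ha h.1)]

theorem length_replaceMiddles (l : List V) : (replaceMiddles S W f l).length = l.length := by
  induction l using replaceMiddles.induct (S := S) (W := W) with
  | case1 u w v rest h ih => rw [replaceMiddles, if_pos h]; simpa using ih
  | case2 u w v rest h ih => rw [replaceMiddles, if_neg h]; simpa using ih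
  | case3 l h => rw [replaceMiddles]; exact h

theorem head?_replaceMiddles (l : List V) : (replaceMiddles S W f l).head? = l.head? := by
  rcases l with _ | ⟨a, l⟩
  · simp [replaceMiddles]
  · obtain ⟨M, hM⟩ := replaceMiddles_cons (S := S) (W := W) (f := f) a l
    rw [hM, List.head?_cons, List.head?_cons]

theorem getLast?_replaceMiddles (l : List V) :
    (replaceMiddles S W f l).getLast? = l.getLast? := by
  induction l using replaceMiddles.induct (S := S) (W := W) with
  | case1 u w v rest h ih =>
    obtain ⟨M, hM⟩ := replaceMiddles_cons (S := S) (W := W) (f := f) v rest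
    rw [hM] at ih
    rw [replaceMiddles, if_pos h, hM]
    simpa only [List.getLast?_cons_cons] using ih
  | case2 u w v rest h ih =>
    obtain ⟨M, hM⟩ := replaceMiddles_cons (S := S) (W := W) (f := f) w (v :: rest)
    rw [hM] at ih
    rw [replaceMiddles, if_neg h, hM]
    simpa only [List.getLast?_cons_cons] using ih
  | case3 l h => rw [replaceMiddles]; exact h

theorem isChain_replaceMiddles {R : V → V → Prop}
    (hf : ∀ u v, ∀ w ∈ W, R u w → R w v → R u (f u v) ∧ R (f u v) v)
    {l : List V} (hl : l.IsChain R) : (replaceMiddles S W f l).IsChain R := by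
  induction l using replaceMiddles.induct (S := S) (W := W) with
  | case1 u w v rest h ih =>
    obtain ⟨huw, hwv, hrest⟩ := List.isChain_cons_cons.mp hl |>.imp_right List.isChain_cons_cons.mp
    obtain ⟨hu, hv⟩ := hf u v w h.2.1 huw hwv
    obtain ⟨M, hM⟩ := replaceMiddles_cons (S := S) (W := W) (f := f) v rest
    have ih := ih hrest
    rw [hM] at ih
    rw [replaceMiddles, if_pos h, hM]
    exact .cons_cons hu (.cons_cons hv ih)
  | case2 u w v rest h ih =>
    obtain ⟨huw, hrest⟩ := List.isChain_cons_cons.mp hl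
    obtain ⟨M, hM⟩ := replaceMiddles_cons (S := S) (W := W) (f := f) w (v :: rest)
    have ih := ih hrest
    rw [hM] at ih
    rw [replaceMiddles, if_neg h, hM]
    exact .cons_cons huw ih
  | case3 l h => rw [replaceMiddles]; exacts [hl, h]

theorem eq_of_infix_replaceMiddles (hSW : Disjoint S W) {l : List V} {u w v : V}
    (hin : [u, w, v] <:+: replaceMiddles S W f l) (hu : u ∈ S) (hw : w ∈ W) (hv : v ∈ S) :
    w = f u v := by
  induction l using replaceMiddles.induct (S := S) (W := W) with
  | case1 u₀ w₀ v₀ rest h ih =>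
    obtain ⟨M, hM⟩ := replaceMiddles_cons (S := S) (W := W) (f := f) v₀ rest
    rw [replaceMiddles, if_pos h] at hin
    rcases List.infix_cons_iff.mp hin with hpre | hin
    · rw [hM] at hpre
      obtain ⟨rfl, rfl, rfl, -⟩ := by simpa using hpre
      rfl
    rcases List.infix_cons_iff.mp hin with hpre | hin
    · rw [hM] at hpre
      obtain ⟨-, rfl, -⟩ := by simpa using hpre
      exact absurd hw (Set.disjoint_left.mp hSW h.2.2)
    · exact ih hin
  | case2 u₀ w₀ v₀ rest h ih =>
    rw [replaceMiddles, if_neg h] at hin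
    rcases List.infix_cons_iff.mp hin with hpre | hin
    · obtain ⟨rfl, hwv⟩ := List.cons_prefix_cons.mp hpre
      obtain ⟨M, hM⟩ := replaceMiddles_cons (S := S) (W := W) (f := f) w₀ (v₀ :: rest)
      obtain rfl : w = w₀ := by
        rw [hM] at hwv
        exact (List.cons_prefix_cons.mp hwv).1
      obtain ⟨M', hM'⟩ := replaceMiddles_cons (S := S) (W := W) (f := f) v₀ rest
      rw [replaceMiddles_cons_of_notMem (Set.disjoint_right.mp hSW hw), hM'] at hwv
      obtain rfl : v = v₀ := by simpa using hwv
      exact absurd ⟨hu, hw, hv⟩ h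
    · exact ih hin
  | case3 l h =>
    rw [replaceMiddles] at hin
    · rcases l with _ | ⟨a, _ | ⟨b, _ | ⟨c, rest⟩⟩⟩
      iterate 3 simpa using hin.length_le
      exact absurd rfl (h a b c rest)
    · exact h

theorem IsDiwalk.replaceMiddles {R : V → V → Prop} {l : List V} {s t : V}
    (hf : ∀ u v, ∀ w ∈ W, R u w → R w v → R u (f u v) ∧ R (f u v) v)
    (h : IsDiwalk R l s t) : IsDiwalk R (replaceMiddles S W f l) s t :=
  ⟨isChain_replaceMiddles hf h.1, (head?_replaceMiddles l).trans h.2.1,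
    (getLast?_replaceMiddles l).trans h.2.2⟩

end ReplaceMiddles

theorem exists_middle_choice {V : Type*} (R : V → V → Prop) (W : Set V) :
    ∃ f : V → V → V, ∀ u v, ∀ w ∈ W, R u w → R w v → R u (f u v) ∧ R (f u v) v := by
  have : ∀ u v : V, ∃ x, ∀ w ∈ W, R u w → R w v → R u x ∧ R x v := by
    intro u v
    by_cases h : ∃ w ∈ W, R u w ∧ R w v
    · obtain ⟨w, -, huw, hwv⟩ := h
      exact ⟨w, fun _ _ _ _ => ⟨huw, hwv⟩⟩
    · exact ⟨u, fun w hw huw hwv => absurd ⟨w, hw, huw, hwv⟩ h⟩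
  choose f hf using this
  exact ⟨f, hf⟩

theorem steinerOrientation_stmt15_general {V : Type*}
    (R : V → V → Prop)
    (S W : Set V) (hSW : Disjoint S W)
    (k : ℕ) (s t : Fin k → V)
    (hpath : ∀ i, ∃ l : List V, IsDipath R l (s i) (t i)) :
    ∃ (P : Fin k → List V) (f : V → V → V),
      (∀ i, IsDipath R (P i) (s i) (t i) ∧
        ∀ l : List V, IsDipath R l (s i) (t i) → (P i).length ≤ l.length) ∧
      (∀ (i : Fin k) (u w v : V), [u, w, v] <:+: P i →
        u ∈ S → v ∈ S → w ∈ W → w = f u v) := by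
  obtain ⟨f, hf⟩ := exists_middle_choice R W
  have hshortest : ∀ i, ∃ l, IsDiwalk R l (s i) (t i) ∧
      ∀ l', IsDiwalk R l' (s i) (t i) → l.length ≤ l'.length :=
    fun i => (hpath i).choose_spec.isDiwalk.exists_shortest
  choose P₀ hP₀ hP₀min using hshortest
  refine ⟨fun i => replaceMiddles S W f (P₀ i), f, fun i => ?_,
    fun i u w v hin hu hv hw => eq_of_infix_replaceMiddles hSW hin hu hw hv⟩
  have hmin : ∀ l, IsDiwalk R l (s i) (t i) →
      (replaceMiddles S W f (P₀ i)).length ≤ l.length := by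
    rw [length_replaceMiddles]
    exact hP₀min i
  exact ⟨((hP₀ i).replaceMiddles hf).isDipath_of_shortest hmin, fun l hl => hmin l hl.isDiwalk⟩

/-- Let `D` be a finite digraph, `S` and `W` disjoint vertex
sets, and `(s_i, t_i)`, `i ∈ [k]`, pairs joined by directed paths in `D`. Then
one can choose shortest directed paths `P_i` from `s_i` to `t_i` together with
a function `f` so that whenever some `P_i` contains a subpath `u → w → v` with
`u, v ∈ S` and `w ∈ W`, then `w = f u v`; i.e. all length-2 subpaths from `u`
to `v` through `W` occurring anywhere among the paths use the same middle
vertex. -/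
theorem steinerOrientation_stmt15 {V : Type*} [Fintype V]
    (R : V → V → Prop) (hR : ∀ v : V, ¬ R v v)
    (S W : Set V) (hSW : Disjoint S W)
    (k : ℕ) (s t : Fin k → V)
    (hpath : ∀ i, ∃ l : List V, IsDipath R l (s i) (t i)) :
    ∃ (P : Fin k → List V) (f : V → V → V),
      (∀ i, IsDipath R (P i) (s i) (t i) ∧
        ∀ l : List V, IsDipath R l (s i) (t i) → (P i).length ≤ l.length) ∧
      (∀ (i : Fin k) (u w v : V), [u, w, v] <:+: P i →
        u ∈ S → v ∈ S → w ∈ W → w = f u v) :=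
  steinerOrientation_stmt15_general R S W hSW k s t hpath
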